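/- Let X : ℤ² → ℝ be a random field whose entries are independent and identically distributed with common law μ, and suppose μ admits a density with respect to Lebesgue measure on ℝ. Then for every η > 0 there exist R₀ ≥ 1 and ℓ₀ > 0 such that for every u ∈ ℤ² and every ℓ ∈ [0, ℓ₀], P(α_{R₀}(u) ≤ ℓ) ≤ η. -/

import Mathlib

open MeasureTheory ProbabilityTheory
open scoped ENNReal

/-- The truncated field `α_R(u) = max_{1 ≤ r ≤ R} (X(u + r e₁) - X(u)) / r`
(for `R ≥ 1` the index set is finite and nonempty, so the `ℝ`-valued
supremum is this maximum). -/
noncomputable def alphaR (X : ℤ × ℤ → ℝ) (R : ℕ) (u : ℤ × ℤ) : ℝ :=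
  ⨆ r : (Finset.Icc 1 R : Finset ℕ), (X (u.1 + ((r : ℕ) : ℤ), u.2) - X u) / ((r : ℕ) : ℝ)

/-!
If `α_R(u) ≤ ℓ` with `ℓ ≥ 0`, then `X(u + j e₁) ≤ X(u) + Rℓ` for all `0 ≤ j ≤ R`. The window
`(X(u + j e₁))_{j ≤ R}` has law `μ^⊗(R+1)` whatever `u`, and under that law the probability of
`x_j ≤ x_0 + c` for all `j` decreases, as `c ↓ 0`, to the probability that `x_0` is a maximum.
The latter is at most `1/(R+1)`: the coordinates are exchangeable and, `μ` having no atoms,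
almost surely distinct. So choose `R` with `1/(R+1) < η`, then `c`, and `ℓ₀ = c/R`.
-/

lemma ProbabilityTheory.iIndepFun.map_comp_eq_pi {Ω ι κ β : Type*} [MeasurableSpace Ω]
    [MeasurableSpace β] [Fintype κ] {P : Measure Ω} [IsProbabilityMeasure P]
    {X : ι → Ω → β} {μ : Measure β} (hmeas : ∀ i, Measurable (X i)) (hindep : iIndepFun X P)
    (hlaw : ∀ i, P.map (X i) = μ) {g : κ → ι} (hg : g.Injective) :
    P.map (fun ω k => X (g k) ω) = Measure.pi fun _ : κ => μ := by
  rw [(hindep.precomp hg).map_fun_eq_pi_map fun k => (hmeas (g k)).aemeasurable]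
  simp only [hlaw]

lemma measurePreserving_comp_perm {ι β : Type*} [Fintype ι] [MeasurableSpace β]
    (μ : Measure β) [IsProbabilityMeasure μ] (σ : Equiv.Perm ι) :
    MeasurePreserving (fun x : ι → β => x ∘ σ) (Measure.pi fun _ => μ)
      (Measure.pi fun _ => μ) :=
  ⟨by fun_prop, (iIndepFun_pi (X := fun _ => id) fun _ => aemeasurable_id).map_comp_eq_pi
    (fun i => measurable_pi_apply i) (fun i => (measurePreserving_eval _ i).map_eq) σ.injective⟩

lemma measure_prod_diagonal {α : Type*} [MeasurableSpace α] [MeasurableEq α]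
    (μ ν : Measure α) [SFinite ν] [NullSingletonClass ν] :
    (μ.prod ν) (Set.diagonal α) = 0 := by
  rw [Measure.measure_prod_null measurableSet_diagonal]
  refine Filter.Eventually.of_forall fun x => ?_
  simp [Set.preimage]

lemma measure_pi_setOf_apply_eq_apply_eq_zero {ι : Type*} [Fintype ι] (μ : Measure ℝ)
    [IsProbabilityMeasure μ] [NullSingletonClass μ] {i j : ι} (hij : i ≠ j) :
    (Measure.pi fun _ : ι => μ) {x | x i = x j} = 0 := by
  have hind : IndepFun (fun x : ι → ℝ => x i) (fun x => x j) (Measure.pi fun _ => μ) :=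
    (iIndepFun_pi (X := fun _ => id) fun _ => aemeasurable_id).indepFun hij
  have hpair : (Measure.pi fun _ : ι => μ).map (fun x => (x i, x j)) = μ.prod μ := by
    rw [(indepFun_iff_map_prod_eq_prod_map_map (measurable_pi_apply i).aemeasurable
      (measurable_pi_apply j).aemeasurable).1 hind, (measurePreserving_eval _ i).map_eq,
      (measurePreserving_eval _ j).map_eq]
  change (Measure.pi fun _ : ι => μ) ((fun x => (x i, x j)) ⁻¹' Set.diagonal ℝ) = 0
  rw [← Measure.map_apply ((measurable_pi_apply i).prodMk (measurable_pi_apply j))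
    measurableSet_diagonal, hpair, measure_prod_diagonal]

lemma measure_pi_setOf_forall_le_apply_le_inv_card {ι : Type*} [Fintype ι] (μ : Measure ℝ)
    [IsProbabilityMeasure μ] [NullSingletonClass μ] (i : ι) :
    (Measure.pi fun _ : ι => μ) {x | ∀ j, x j ≤ x i} ≤ (Fintype.card ι : ℝ≥0∞)⁻¹ := by
  classical
  set ν := Measure.pi fun _ : ι => μ
  set B : ι → Set (ι → ℝ) := fun k => {x | ∀ j, x j ≤ x k}
  have hB : ∀ k, MeasurableSet (B k) := fun k => by
    simp only [B, Set.ofPred_forall]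
    exact .iInter fun j => measurableSet_le (measurable_pi_apply j) (measurable_pi_apply k)
  have hB_eq : ∀ k, ν (B k) = ν (B i) := fun k => by
    have hpre : B k = (fun x => x ∘ Equiv.swap i k) ⁻¹' B i := by
      ext x
      simp only [B, Set.mem_ofPred_eq, Set.mem_preimage, Function.comp_apply,
        Equiv.swap_apply_left]
      exact (Equiv.swap i k).forall_congr_right.symm
    rw [hpre, (measurePreserving_comp_perm μ _).measure_preimage (hB i).nullMeasurableSet]
  have hdisj : Pairwise (Function.onFun (AEDisjoint ν) B) := fun k k' hkk' =>
    measure_mono_null (fun x hx => le_antisymm (hx.2 k) (hx.1 k'))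
      (measure_pi_setOf_apply_eq_apply_eq_zero μ hkk')
  have hsum : Fintype.card ι * ν (B i) ≤ 1 :=
    calc Fintype.card ι * ν (B i) = ∑ k, ν (B k) := by simp [hB_eq]
      _ = ν (⋃ k, B k) :=
        ((measure_iUnion₀ hdisj fun k => (hB k).nullMeasurableSet).trans (tsum_fintype _)).symm
      _ ≤ 1 := prob_le_one
  exact ENNReal.le_inv_iff_mul_le.2 (by rwa [mul_comm])

lemma exists_pos_measure_pi_setOf_forall_le_add_lt {ι : Type*} [Fintype ι] (μ : Measure ℝ)
    [IsProbabilityMeasure μ] [NullSingletonClass μ] (i : ι) {a : ℝ≥0∞}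
    (ha : (Fintype.card ι : ℝ≥0∞)⁻¹ < a) :
    ∃ c > 0, (Measure.pi fun _ : ι => μ) {x | ∀ j, x j ≤ x i + c} < a := by
  set S : ℝ → Set (ι → ℝ) := fun c => {x | ∀ j, x j ≤ x i + c}
  have hS : ∀ c, MeasurableSet (S c) := fun c => by
    simp only [S, Set.ofPred_forall]
    exact .iInter fun j => measurableSet_le (measurable_pi_apply j) (by fun_prop)
  have hlim : (⋂ c > 0, S c) = {x | ∀ j, x j ≤ x i} := by
    ext x
    simp only [S, Set.mem_iInter, Set.mem_ofPred_eq]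
    exact ⟨fun h j => le_of_forall_pos_le_add fun c hc => h c hc j,
      fun h c hc j => (h j).trans (le_add_of_nonneg_right hc.le)⟩
  have htends := tendsto_measure_biInter_gt (μ := Measure.pi fun _ : ι => μ)
    (fun c _ => (hS c).nullMeasurableSet)
    (fun c c' _ hcc' x hx j => (hx j).trans (by linarith)) ⟨1, one_pos, measure_ne_top _ _⟩
  rw [hlim] at htends
  exact ((htends.eventually (gt_mem_nhds
    ((measure_pi_setOf_forall_le_apply_le_inv_card μ i).trans_lt ha))).and
    self_mem_nhdsWithin).exists.imp fun c hc => ⟨hc.2, hc.1⟩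

lemma le_add_mul_of_alphaR_le {X : ℤ × ℤ → ℝ} {R : ℕ} {u : ℤ × ℤ} {ℓ : ℝ}
    (h : alphaR X R u ≤ ℓ) {r : ℕ} (hr : 1 ≤ r) (hrR : r ≤ R) :
    X (u.1 + r, u.2) ≤ X u + r * ℓ := by
  have hle : (X (u.1 + r, u.2) - X u) / r ≤ ℓ :=
    (le_ciSup (Set.finite_range _).bddAbove (⟨r, Finset.mem_Icc.2 ⟨hr, hrR⟩⟩ :
      (Finset.Icc 1 R : Finset ℕ))).trans h
  rw [div_le_iff₀ (by exact_mod_cast hr)] at hle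
  linarith

lemma le_add_mul_of_alphaR_le_of_nonneg {X : ℤ × ℤ → ℝ} {R : ℕ} {u : ℤ × ℤ} {ℓ : ℝ}
    (h : alphaR X R u ≤ ℓ) (hℓ : 0 ≤ ℓ) (j : Fin (R + 1)) :
    X (u.1 + (j : ℕ), u.2) ≤ X u + R * ℓ := by
  have hjR : (j : ℕ) ≤ R := Nat.lt_succ_iff.1 j.isLt
  rcases Nat.eq_zero_or_pos (j : ℕ) with hj | hj
  · have hRℓ : (0 : ℝ) ≤ R * ℓ := by positivity
    simpa [hj] using hRℓ
  · have hmul : ((j : ℕ) : ℝ) * ℓ ≤ R * ℓ := by gcongr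
    linarith [le_add_mul_of_alphaR_le h hj hjR]

theorem statement13
    {Ω : Type} [MeasurableSpace Ω] (P : Measure Ω) [IsProbabilityMeasure P]
    (X : ℤ × ℤ → Ω → ℝ) (μ : Measure ℝ) [IsProbabilityMeasure μ]
    (hmeas : ∀ u, Measurable (X u))
    (hindep : iIndepFun X P)
    (hlaw : ∀ u, Measure.map (X u) P = μ)
    (hdens : ∃ φ : ℝ → ℝ≥0∞, Measurable φ ∧ μ = (volume : Measure ℝ).withDensity φ) :
    ∀ η : ℝ, 0 < η → ∃ R₀ : ℕ, 1 ≤ R₀ ∧ ∃ ℓ₀ : ℝ, 0 < ℓ₀ ∧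
      ∀ u : ℤ × ℤ, ∀ ℓ : ℝ, 0 ≤ ℓ → ℓ ≤ ℓ₀ →
        P {ω | alphaR (fun v => X v ω) R₀ u ≤ ℓ} ≤ ENNReal.ofReal η := by
  have : NullSingletonClass μ := by
    obtain ⟨φ, -, rfl⟩ := hdens
    infer_instance
  intro η hη
  obtain ⟨n, hn⟩ := ENNReal.exists_inv_nat_lt (ENNReal.ofReal_pos.2 hη).ne'
  have hcard : (Fintype.card (Fin (n + 2)) : ℝ≥0∞)⁻¹ < ENNReal.ofReal η :=
    lt_of_le_of_lt (ENNReal.inv_le_inv.2 (by simp)) hn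
  obtain ⟨c, hc, hmax⟩ := exists_pos_measure_pi_setOf_forall_le_add_lt μ 0 hcard
  refine ⟨n + 1, by omega, c / (n + 1), by positivity, fun u ℓ hℓ hℓc => ?_⟩
  set Y : Ω → Fin (n + 2) → ℝ := fun ω j => X (u.1 + (j : ℕ), u.2) ω
  have hY : P.map Y = Measure.pi fun _ => μ :=
    hindep.map_comp_eq_pi hmeas hlaw (g := fun j : Fin (n + 2) => (u.1 + (j : ℕ), u.2))
      fun a b hab => Fin.ext (by simpa using hab)
  have hsub : {ω | alphaR (fun v => X v ω) (n + 1) u ≤ ℓ} ⊆ Y ⁻¹' {x | ∀ j, x j ≤ x 0 + c} := by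
    intro ω hω j
    have hℓc' : ((n + 1 : ℕ) : ℝ) * ℓ ≤ c := by
      rw [le_div_iff₀ (by positivity)] at hℓc
      push_cast
      linarith
    simpa [Y] using (le_add_mul_of_alphaR_le_of_nonneg hω hℓ j).trans (by linarith)
  calc P {ω | alphaR (fun v => X v ω) (n + 1) u ≤ ℓ} ≤ P (Y ⁻¹' {x | ∀ j, x j ≤ x 0 + c}) :=
        measure_mono hsub
    _ ≤ (Measure.pi fun _ : Fin (n + 2) => μ) {x | ∀ j, x j ≤ x 0 + c} :=
        hY ▸ Measure.le_map_apply (by fun_prop) _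
    _ ≤ ENNReal.ofReal η := hmax.le
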